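/- Define O_R : [0,1) → [0,1) by O_R(x) = 1/(2⌊1/(1−x)⌋ + 1 − 1/(1−x)), and let Õ : [0,1) → [0,1) be the interval realization of the dyadic odometer, defined by Õ(x) = x + 3/2^n − 1 for x ∈ I_n = [(2^{n−1}−1)/2^{n−1}, (2^n−1)/2^n), n ∈ ℕ. Then O_R is topologically conjugate to Õ: there exists a homeomorphism h : [0,1) → [0,1) such that O_R ∘ h = h ∘ Õ. -/

import Mathlib

/-- The odometer associated to the backward continued fraction (Renyi) map:
`O_R(x) = 1/(2⌊1/(1−x)⌋ + 1 − 1/(1−x))`. -/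
noncomputable def renyiOdometer (x : ℝ) : ℝ :=
  1 / (2 * (⌊1 / (1 - x)⌋ : ℝ) + 1 - 1 / (1 - x))

/-- The interval realization of the dyadic odometer: `Õ(x) = x + 3/2^n − 1` on
`I_n = [(2^{n−1}−1)/2^{n−1}, (2^n−1)/2^n)`; for `x ∈ I_n` one has
`n = Int.log 2 (1/(1−x)) + 1`. -/
noncomputable def dyadicIntervalOdometer (x : ℝ) : ℝ :=
  x + 3 / (2 : ℝ) ^ (Int.log 2 (1 / (1 - x)) + 1) - 1

namespace RenyiConj

def A : ℕ → ℕ → ℤ × ℤ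
  | 0, m => if m = 0 then (0, 1) else (1, 1)
  | k+1, m =>
      if m < 2 ^ k then ((A k m).1, (A k m).1 + (A k m).2)
      else ((A k (m - 2 ^ k)).2, 2 * (A k (m - 2 ^ k)).2 - (A k (m - 2 ^ k)).1)

lemma A_zero (k : ℕ) : A k 0 = (0, 1) := by
  induction k with
  | zero => rfl
  | succ k ih => simp [A, Nat.two_pow_pos, ih]

lemma A_top (k : ℕ) : A k (2 ^ k) = (1, 1) := by
  induction k with
  | zero => rfl
  | succ k ih =>
    have h : ¬ (2 ^ (k+1) < 2 ^ k) := by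
      have : (2:ℕ) ^ k ≤ 2 ^ (k+1) := Nat.pow_le_pow_right (by norm_num) (by omega)
      omega
    have h2 : 2 ^ (k+1) - 2 ^ k = 2 ^ k := by
      have : (2:ℕ) ^ (k+1) = 2 ^ k + 2 ^ k := by rw [pow_succ]; ring
      omega
    rw [A, if_neg h, h2, ih]; rfl

lemma A_last (k : ℕ) : A k (2 ^ k - 1) = ((k : ℤ), (k : ℤ) + 1) := by
  induction k with
  | zero => simp [A]
  | succ k ih =>
    have h1 : (1:ℕ) ≤ 2 ^ k := Nat.one_le_two_pow
    have hp : (2:ℕ) ^ (k+1) = 2 ^ k + 2 ^ k := by rw [pow_succ]; ring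
    have h : ¬ (2 ^ (k+1) - 1 < 2 ^ k) := by omega
    have h2 : 2 ^ (k+1) - 1 - 2 ^ k = 2 ^ k - 1 := by omega
    rw [A, if_neg h, h2, ih]
    simp only [Prod.mk.injEq]
    constructor
    · push_cast; ring
    · push_cast; ring

lemma A_basic (k : ℕ) : ∀ m, m ≤ 2 ^ k →
    0 ≤ (A k m).1 ∧ (A k m).1 ≤ (A k m).2 ∧ 0 < (A k m).2 ∧
      (m < 2 ^ k → (A k m).1 < (A k m).2) := by
  induction k with
  | zero =>
    intro m hm
    interval_cases m
    · simp [A]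
    · simp [A]
  | succ k ih =>
    intro m hm
    have hp : (2:ℕ) ^ (k+1) = 2 ^ k + 2 ^ k := by rw [pow_succ]; ring
    by_cases h : m < 2 ^ k
    · obtain ⟨h1, h2, h3, h4⟩ := ih m h.le
      have h5 := h4 h
      rw [A, if_pos h]
      exact ⟨h1, by omega, by omega, fun _ => by omega⟩
    · have hm' : m - 2 ^ k ≤ 2 ^ k := by omega
      obtain ⟨h1, h2, h3, h4⟩ := ih (m - 2 ^ k) hm'
      rw [A, if_neg h]
      refine ⟨by omega, by omega, by omega, fun hlt => ?_⟩
      have h5 := h4 (by omega)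
      omega


lemma A_det (k : ℕ) : ∀ m, m + 1 ≤ 2 ^ k →
    (A k (m+1)).1 * (A k m).2 - (A k m).1 * (A k (m+1)).2 = 1 := by
  induction k with
  | zero =>
    intro m hm
    have : m = 0 := by omega
    subst this
    simp [A]
  | succ k ih =>
    intro m hm
    have hp : (2:ℕ) ^ (k+1) = 2 ^ k + 2 ^ k := by rw [pow_succ]; ring
    rcases lt_trichotomy (m+1) (2^k) with h | h | h
    · have hm0 : m < 2 ^ k := by omega
      rw [A, A, if_pos h, if_pos hm0]
      have := ih m h.le
      ring_nf; ring_nf at this; linarith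
    · have h1 : (1:ℕ) ≤ 2 ^ k := Nat.one_le_two_pow
      have hm0 : m < 2 ^ k := by omega
      have hm1 : ¬ (m + 1 < 2 ^ k) := by omega
      have hms : m = 2 ^ k - 1 := by omega
      have hsub : m + 1 - 2 ^ k = 0 := by omega
      rw [A, A, if_neg hm1, if_pos hm0, hsub, A_zero, hms, A_last]
      simp; ring
    · have hm0 : ¬ (m < 2 ^ k) := by omega
      have hm1 : ¬ (m + 1 < 2 ^ k) := by omega
      have hsub : m + 1 - 2 ^ k = (m - 2 ^ k) + 1 := by omega
      rw [A, A, if_neg hm1, if_neg hm0, hsub]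
      have := ih (m - 2 ^ k) (by omega)
      ring_nf; ring_nf at this; linarith

lemma A_densum (k : ℕ) : ∀ m, m + 1 ≤ 2 ^ k →
    (k : ℤ) + 2 ≤ (A k m).2 + (A k (m+1)).2 := by
  induction k with
  | zero =>
    intro m hm
    have : m = 0 := by omega
    subst this
    simp [A]
  | succ k ih =>
    intro m hm
    have hp : (2:ℕ) ^ (k+1) = 2 ^ k + 2 ^ k := by rw [pow_succ]; ring
    rcases lt_trichotomy (m+1) (2^k) with h | h | h
    · have hm0 : m < 2 ^ k := by omega
      have hdet := A_det k m h.le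
      obtain ⟨b1, b2, b3, b4⟩ := A_basic k m (by omega)
      obtain ⟨c1, c2, c3, c4⟩ := A_basic k (m+1) (by omega)
      have hsum := ih m h.le
      have hpp : 1 ≤ (A k m).1 + (A k (m+1)).1 := by nlinarith
      rw [A, A, if_pos h, if_pos hm0]
      push_cast
      omega
    · have h1 : (1:ℕ) ≤ 2 ^ k := Nat.one_le_two_pow
      have hm0 : m < 2 ^ k := by omega
      have hm1 : ¬ (m + 1 < 2 ^ k) := by omega
      have hms : m = 2 ^ k - 1 := by omega
      have hsub : m + 1 - 2 ^ k = 0 := by omega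
      rw [A, A, if_neg hm1, if_pos hm0, hsub, A_zero, hms, A_last]
      simp only []
      push_cast
      omega
    · have hm0 : ¬ (m < 2 ^ k) := by omega
      have hm1 : ¬ (m + 1 < 2 ^ k) := by omega
      have hsub : m + 1 - 2 ^ k = (m - 2 ^ k) + 1 := by omega
      rw [A, A, if_neg hm1, if_neg hm0, hsub]
      have hsum := ih (m - 2 ^ k) (by omega)
      obtain ⟨b1, b2, b3, b4⟩ := A_basic k (m - 2^k) (by omega)
      obtain ⟨c1, c2, c3, c4⟩ := A_basic k (m - 2^k + 1) (by omega)
      have b5 := b4 (by omega)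
      simp only []
      push_cast
      omega

lemma A_double (k : ℕ) : ∀ m, m ≤ 2 ^ k → A (k+1) (2*m) = A k m := by
  induction k with
  | zero =>
    intro m hm
    interval_cases m
    · rfl
    · rfl
  | succ k ih =>
    intro m hm
    have hp : (2:ℕ) ^ (k+1) = 2 ^ k + 2 ^ k := by rw [pow_succ]; ring
    by_cases h : m < 2 ^ k
    · have h2 : 2*m < 2 ^ (k+1) := by omega
      rw [A, if_pos h2, ih m h.le]
      rw [A, if_pos h]
    · have h2 : ¬ (2*m < 2 ^ (k+1)) := by omega
      have h3 : 2*m - 2^(k+1) = 2*(m - 2^k) := by omega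
      rw [A, if_neg h2, h3, ih (m - 2^k) (by omega)]
      rw [A, if_neg h]
/-- The value of the inverse-Minkowski map at the dyadic `m/2^k`. -/
noncomputable def Q (k m : ℕ) : ℝ := ((A k m).1 : ℝ) / ((A k m).2 : ℝ)

lemma Q_zero (k : ℕ) : Q k 0 = 0 := by simp [Q, A_zero]

lemma Q_last (k : ℕ) : Q k (2 ^ k - 1) = (k : ℝ) / ((k : ℝ) + 1) := by
  simp [Q, A_last]

lemma den_pos {k m : ℕ} (hm : m ≤ 2 ^ k) : (0:ℝ) < ((A k m).2 : ℝ) := by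
  exact_mod_cast (A_basic k m hm).2.2.1

lemma Q_nonneg {k m : ℕ} (hm : m ≤ 2 ^ k) : 0 ≤ Q k m :=
  div_nonneg (by exact_mod_cast (A_basic k m hm).1) (den_pos hm).le

lemma Q_lt_one {k m : ℕ} (hm : m < 2 ^ k) : Q k m < 1 := by
  rw [Q, div_lt_one (den_pos hm.le)]
  exact_mod_cast (A_basic k m hm.le).2.2.2 hm

lemma Q_le_one {k m : ℕ} (hm : m ≤ 2 ^ k) : Q k m ≤ 1 := by
  rw [Q, div_le_one (den_pos hm)]
  exact_mod_cast (A_basic k m hm).2.1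

lemma Q_lt_succ {k m : ℕ} (hm : m + 1 ≤ 2 ^ k) : Q k m < Q k (m+1) := by
  have hd := A_det k m hm
  have h1 := den_pos (show m ≤ 2^k by omega)
  have h2 := den_pos hm
  rw [Q, Q, div_lt_div_iff₀ h1 h2]
  have : ((A k (m+1)).1 * (A k m).2 : ℝ) - (A k m).1 * (A k (m+1)).2 = 1 := by
    exact_mod_cast congrArg (Int.cast : ℤ → ℝ) hd
  linarith

lemma Q_mono {k : ℕ} : ∀ {m m' : ℕ}, m ≤ m' → m' ≤ 2 ^ k → Q k m ≤ Q k m' := by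
  intro m m'
  induction m' with
  | zero =>
    intro h _
    have hm0 : m = 0 := by omega
    subst hm0; exact le_rfl
  | succ n ih =>
    intro h h2
    rcases Nat.lt_or_ge m (n+1) with hl | hl
    · exact le_trans (ih (by omega) (by omega)) (Q_lt_succ h2).le
    · have : m = n + 1 := by omega
      subst this; exact le_rfl

lemma Q_strict_mono {k m m' : ℕ} (h : m < m') (h2 : m' ≤ 2 ^ k) : Q k m < Q k m' :=
  lt_of_lt_of_le (Q_lt_succ (by omega)) (Q_mono h h2)

lemma Q_gap {k m : ℕ} (hm : m + 1 ≤ 2 ^ k) :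
    Q k (m+1) - Q k m ≤ 1 / ((k:ℝ) + 1) := by
  have hd := A_det k m hm
  have hs := A_densum k m hm
  have h1 := den_pos (show m ≤ 2^k by omega)
  have h2 := den_pos hm
  have hdr : ((A k (m+1)).1 : ℝ) * ((A k m).2 : ℝ)
      - ((A k m).1 : ℝ) * ((A k (m+1)).2 : ℝ) = 1 := by
    have := congrArg (fun z : ℤ => (z : ℝ)) hd
    push_cast at this
    linarith
  have hsr : (k:ℝ) + 2 ≤ ((A k m).2 : ℝ) + ((A k (m+1)).2 : ℝ) := by
    have := congrArg (fun z : ℤ => (z : ℝ)) (rfl : (A k m).2 + (A k (m+1)).2 = _)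
    exact_mod_cast hs
  have hq1 : (1:ℝ) ≤ ((A k m).2 : ℝ) := by
    exact_mod_cast (A_basic k m (by omega)).2.2.1
  have hq1' : (1:ℝ) ≤ ((A k (m+1)).2 : ℝ) := by
    exact_mod_cast (A_basic k (m+1) hm).2.2.1
  have hgap : Q k (m+1) - Q k m = 1 / (((A k m).2 : ℝ) * ((A k (m+1)).2 : ℝ)) := by
    rw [Q, Q, div_sub_div _ _ (ne_of_gt h2) (ne_of_gt h1)]
    rw [show ((A k (m+1)).1 : ℝ) * ((A k m).2 : ℝ)
        - ((A k (m+1)).2 : ℝ) * ((A k m).1 : ℝ) = 1 by linarith]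
    rw [mul_comm]
  rw [hgap]
  apply one_div_le_one_div_of_le (by positivity)
  nlinarith [mul_nonneg (sub_nonneg.2 hq1) (sub_nonneg.2 hq1')]

lemma Q_gap_general {k : ℕ} : ∀ {m m' : ℕ}, m ≤ m' → m' ≤ 2 ^ k →
    Q k m' - Q k m ≤ ((m' - m : ℕ) : ℝ) / ((k:ℝ) + 1) := by
  intro m m'
  induction m' with
  | zero =>
    intro h _
    have hm0 : m = 0 := by omega
    subst hm0; simp
  | succ n ih =>
    intro h h2
    rcases Nat.lt_or_ge m (n+1) with hl | hl
    · have ih2 := ih (by omega) (by omega)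
      have hg := Q_gap h2
      have hcast : ((n + 1 - m : ℕ) : ℝ) = ((n - m : ℕ) : ℝ) + 1 := by
        have hh : n + 1 - m = (n - m) + 1 := by omega
        rw [hh]; push_cast; ring
      rw [hcast, add_div]
      have hk : (0:ℝ) < (k:ℝ) + 1 := by positivity
      linarith
    · have : m = n + 1 := by omega
      subst this; simp

lemma Q_double {k m : ℕ} (hm : m ≤ 2 ^ k) : Q (k+1) (2*m) = Q k m := by
  rw [Q, Q, A_double k m hm]

lemma Q_shift {k m : ℕ} (hm : m ≤ 2 ^ k) : ∀ j, Q (k+j) (m * 2 ^ j) = Q k m := by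
  intro j
  induction j with
  | zero => simp
  | succ j ih =>
    have h1 : m * 2 ^ (j+1) = 2 * (m * 2 ^ j) := by ring
    have h2 : m * 2 ^ j ≤ 2 ^ (k+j) := by
      rw [pow_add]; exact Nat.mul_le_mul_right _ hm
    have h3 : k + (j+1) = (k+j) + 1 := by omega
    rw [h3, h1, Q_double h2, ih]

lemma Q_cross {k m j m' : ℕ} (hm : m ≤ 2 ^ k) (hm' : m' ≤ 2 ^ j)
    (h : (m : ℝ) / 2 ^ k ≤ (m' : ℝ) / 2 ^ j) : Q k m ≤ Q j m' := by
  have hnat : m * 2 ^ j ≤ m' * 2 ^ k := by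
    have h2 : (0:ℝ) < 2 ^ k := by positivity
    have h3 : (0:ℝ) < 2 ^ j := by positivity
    rw [div_le_div_iff₀ h2 h3] at h
    exact_mod_cast h
  have e1 : Q k m = Q (k+j) (m * 2 ^ j) := (Q_shift hm j).symm
  have e2 : Q j m' = Q (j+k) (m' * 2 ^ k) := (Q_shift hm' k).symm
  rw [e1, e2, Nat.add_comm j k]
  exact Q_mono hnat (by rw [pow_add, Nat.mul_comm]; exact Nat.mul_le_mul_left _ hm')

lemma Q_f0 {k m : ℕ} (hm : m < 2 ^ k) : Q (k+1) m = Q k m / (1 + Q k m) := by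
  obtain ⟨b1, b2, b3, b4⟩ := A_basic k m hm.le
  have hp : (0:ℝ) ≤ ((A k m).1 : ℝ) := by exact_mod_cast b1
  have hq : (0:ℝ) < ((A k m).2 : ℝ) := by exact_mod_cast b3
  rw [Q, Q, A, if_pos hm]
  simp only []
  push_cast
  rw [eq_div_iff (by positivity)]
  field_simp
  ring

lemma Q_f1 {k m : ℕ} (hm : m ≤ 2 ^ k) : Q (k+1) (2 ^ k + m) = 1 / (2 - Q k m) := by
  obtain ⟨b1, b2, b3, b4⟩ := A_basic k m hm
  have hp : (0:ℝ) ≤ ((A k m).1 : ℝ) := by exact_mod_cast b1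
  have hpq : ((A k m).1 : ℝ) ≤ ((A k m).2 : ℝ) := by exact_mod_cast b2
  have hq : (0:ℝ) < ((A k m).2 : ℝ) := by exact_mod_cast b3
  have hne : ¬ (2 ^ k + m < 2 ^ k) := by omega
  have hsub : 2 ^ k + m - 2 ^ k = m := by omega
  rw [Q, Q, A, if_neg hne, hsub]
  simp only []
  push_cast
  have h2 : (0:ℝ) < 2 * ((A k m).2 : ℝ) - ((A k m).1 : ℝ) := by linarith
  have h3 : 2 - ((A k m).1 : ℝ) / ((A k m).2 : ℝ) ≠ 0 := by
    rw [sub_ne_zero]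
    intro hcon
    have := div_le_one_of_le₀ hpq hq.le
    rw [← hcon] at this
    norm_num at this
  rw [eq_div_iff h3]
  have h2' : ((A k m).2 : ℝ) * 2 - ((A k m).1 : ℝ) ≠ 0 := by linarith
  field_simp
  try ring

/-- floor of `2^k x`. -/
noncomputable def mfl (k : ℕ) (x : ℝ) : ℕ := ⌊(2:ℝ) ^ k * x⌋₊

/-- dyadic approximations to the conjugacy. -/
noncomputable def aseq (x : ℝ) (k : ℕ) : ℝ := Q k (mfl k x)

/-- The conjugating map (inverse Minkowski question mark function). -/
noncomputable def conj (x : ℝ) : ℝ := ⨆ k, aseq x k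

lemma mfl_lt {x : ℝ} (hx0 : 0 ≤ x) (hx1 : x < 1) (k : ℕ) : mfl k x < 2 ^ k := by
  rw [mfl, Nat.floor_lt (by positivity)]
  push_cast
  have h2 : (0:ℝ) < 2 ^ k := by positivity
  nlinarith

lemma mfl_le {x : ℝ} (hx0 : 0 ≤ x) (k : ℕ) : (mfl k x : ℝ) ≤ 2 ^ k * x :=
  Nat.floor_le (by positivity)

lemma lt_mfl_add (x : ℝ) (k : ℕ) : (2:ℝ) ^ k * x < mfl k x + 1 :=
  Nat.lt_floor_add_one _

lemma mfl_div_le {x : ℝ} (hx0 : 0 ≤ x) (k : ℕ) : (mfl k x : ℝ) / 2 ^ k ≤ x := by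
  rw [div_le_iff₀ (by positivity)]
  rw [mul_comm]
  exact mfl_le hx0 k

lemma le_mfl_succ_div (x : ℝ) (k : ℕ) : x ≤ ((mfl k x : ℝ) + 1) / 2 ^ k := by
  rw [le_div_iff₀ (by positivity)]
  have := lt_mfl_add x k
  nlinarith [this]

lemma aseq_mono {x : ℝ} (hx0 : 0 ≤ x) (hx1 : x < 1) : Monotone (aseq x) := by
  apply monotone_nat_of_le_succ
  intro k
  have hlt := mfl_lt hx0 hx1 k
  have h2 : 2 * mfl k x ≤ mfl (k+1) x := by
    apply Nat.le_floor
    push_cast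
    have := mfl_le hx0 k
    calc (2:ℝ) * (mfl k x) ≤ 2 * (2 ^ k * x) := by linarith
    _ = 2 ^ (k+1) * x := by ring
  calc aseq x k = Q (k+1) (2 * mfl k x) := (Q_double hlt.le).symm
  _ ≤ Q (k+1) (mfl (k+1) x) := Q_mono h2 (mfl_lt hx0 hx1 (k+1)).le
  _ = aseq x (k+1) := rfl

lemma aseq_le_Q {x : ℝ} (hx0 : 0 ≤ x) (hx1 : x < 1) {j m' : ℕ} (hm' : m' ≤ 2 ^ j)
    (h : x ≤ (m' : ℝ) / 2 ^ j) (k : ℕ) : aseq x k ≤ Q j m' := by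
  apply Q_cross (mfl_lt hx0 hx1 k).le hm'
  exact le_trans (mfl_div_le hx0 k) h

lemma aseq_nonneg {x : ℝ} (hx0 : 0 ≤ x) (hx1 : x < 1) (k : ℕ) : 0 ≤ aseq x k :=
  Q_nonneg (mfl_lt hx0 hx1 k).le

lemma aseq_le_one {x : ℝ} (hx0 : 0 ≤ x) (hx1 : x < 1) (k : ℕ) : aseq x k ≤ 1 :=
  Q_le_one (mfl_lt hx0 hx1 k).le

lemma aseq_bdd {x : ℝ} (hx0 : 0 ≤ x) (hx1 : x < 1) : BddAbove (Set.range (aseq x)) := by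
  refine ⟨1, ?_⟩
  rintro y ⟨k, rfl⟩
  exact aseq_le_one hx0 hx1 k

lemma conj_tendsto {x : ℝ} (hx0 : 0 ≤ x) (hx1 : x < 1) :
    Filter.Tendsto (aseq x) Filter.atTop (nhds (conj x)) :=
  tendsto_atTop_ciSup (aseq_mono hx0 hx1) (aseq_bdd hx0 hx1)

lemma aseq_le_conj {x : ℝ} (hx0 : 0 ≤ x) (hx1 : x < 1) (k : ℕ) : aseq x k ≤ conj x :=
  le_ciSup (aseq_bdd hx0 hx1) k

lemma conj_le_Q {x : ℝ} (hx0 : 0 ≤ x) (hx1 : x < 1) {j m' : ℕ} (hm' : m' ≤ 2 ^ j)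
    (h : x ≤ (m' : ℝ) / 2 ^ j) : conj x ≤ Q j m' :=
  ciSup_le (aseq_le_Q hx0 hx1 hm' h)

lemma conj_nonneg {x : ℝ} (hx0 : 0 ≤ x) (hx1 : x < 1) : 0 ≤ conj x :=
  le_trans (aseq_nonneg hx0 hx1 0) (aseq_le_conj hx0 hx1 0)

lemma conj_zero : conj 0 = 0 := by
  have : ∀ k, aseq 0 k = 0 := by
    intro k
    rw [aseq, mfl]
    norm_num [Q_zero]
  rw [conj]
  simp [this]

lemma Q_last_lt_one (j : ℕ) : Q j (2 ^ j - 1) < 1 := by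
  rw [Q_last]
  rw [div_lt_one (by positivity)]
  linarith

lemma conj_le_last {x : ℝ} (hx0 : 0 ≤ x) {j : ℕ} (hx : x ≤ 1 - 1 / 2 ^ j) :
    conj x ≤ Q j (2 ^ j - 1) := by
  have h1 : (1:ℕ) ≤ 2 ^ j := Nat.one_le_two_pow
  have hx1 : x < 1 := by
    have : (0:ℝ) < 1 / 2 ^ j := by positivity
    linarith
  apply conj_le_Q hx0 hx1 (by omega)
  have hc : ((2 ^ j - 1 : ℕ) : ℝ) = 2 ^ j - 1 := by
    push_cast [h1]
    ring
  rw [hc]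
  rw [le_div_iff₀ (by positivity)]
  have h2 : (0:ℝ) < 2 ^ j := by positivity
  have h3 : (1 / 2 ^ j : ℝ) * 2 ^ j = 1 := by field_simp
  nlinarith [mul_le_mul_of_nonneg_right hx h2.le]

lemma conj_lt_one {x : ℝ} (hx0 : 0 ≤ x) (hx1 : x < 1) : conj x < 1 := by
  obtain ⟨j, hj⟩ := exists_pow_lt_of_lt_one (by linarith : (0:ℝ) < 1 - x) (by norm_num : (1/2:ℝ) < 1)
  have hj2 : (1:ℝ) / 2 ^ j < 1 - x := by
    rw [div_pow, one_pow] at hj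
    exact hj
  exact lt_of_le_of_lt (conj_le_last hx0 (by linarith)) (Q_last_lt_one j)

lemma mfl_half (x : ℝ) (k : ℕ) : mfl (k+1) (x/2) = mfl k x := by
  rw [mfl, mfl]
  congr 1
  ring

lemma mfl_halfup {x : ℝ} (hx0 : 0 ≤ x) (k : ℕ) : mfl (k+1) ((1+x)/2) = 2 ^ k + mfl k x := by
  rw [mfl, mfl]
  have he : (2:ℝ) ^ (k+1) * ((1+x)/2) = 2 ^ k * x + ((2^k : ℕ) : ℝ) := by
    push_cast
    ring
  rw [he, Nat.floor_add_natCast (by positivity), Nat.add_comm]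

lemma conj_half {x : ℝ} (hx0 : 0 ≤ x) (hx1 : x < 1) :
    conj (x/2) = conj x / (1 + conj x) := by
  have hy0 : 0 ≤ x/2 := by linarith
  have hy1 : x/2 < 1 := by linarith
  have hb : Filter.Tendsto (fun k => aseq (x/2) (k+1)) Filter.atTop (nhds (conj (x/2))) :=
    (conj_tendsto hy0 hy1).comp (Filter.tendsto_add_atTop_nat 1)
  have heq : ∀ k, aseq (x/2) (k+1) = aseq x k / (1 + aseq x k) := by
    intro k
    rw [aseq, mfl_half, Q_f0 (mfl_lt hx0 hx1 k)]
    rfl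
  have hc : Filter.Tendsto (fun k => aseq x k / (1 + aseq x k)) Filter.atTop
      (nhds (conj x / (1 + conj x))) := by
    apply Filter.Tendsto.div (conj_tendsto hx0 hx1)
    · exact Filter.Tendsto.add tendsto_const_nhds (conj_tendsto hx0 hx1)
    · have h0 := conj_nonneg hx0 hx1
      intro hcon
      have : (0:ℝ) < 1 + conj x := by linarith
      rw [hcon] at this
      exact lt_irrefl 0 this
  rw [funext heq] at hb
  exact tendsto_nhds_unique hb hc

lemma conj_halfup {x : ℝ} (hx0 : 0 ≤ x) (hx1 : x < 1) :
    conj ((1+x)/2) = 1 / (2 - conj x) := by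
  have hy0 : 0 ≤ (1+x)/2 := by linarith
  have hy1 : (1+x)/2 < 1 := by linarith
  have hb : Filter.Tendsto (fun k => aseq ((1+x)/2) (k+1)) Filter.atTop (nhds (conj ((1+x)/2))) :=
    (conj_tendsto hy0 hy1).comp (Filter.tendsto_add_atTop_nat 1)
  have heq : ∀ k, aseq ((1+x)/2) (k+1) = 1 / (2 - aseq x k) := by
    intro k
    rw [aseq, mfl_halfup hx0, Q_f1 (mfl_lt hx0 hx1 k).le]
    rfl
  have hc : Filter.Tendsto (fun k => 1 / (2 - aseq x k)) Filter.atTop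
      (nhds (1 / (2 - conj x))) := by
    apply Filter.Tendsto.div tendsto_const_nhds
    · exact Filter.Tendsto.sub tendsto_const_nhds (conj_tendsto hx0 hx1)
    · have := conj_lt_one hx0 hx1
      intro hcon
      have : (2:ℝ) - conj x > 0 := by linarith
      rw [hcon] at this
      exact lt_irrefl 0 this
  rw [funext heq] at hb
  exact tendsto_nhds_unique hb hc

lemma conj_strictmono {x y : ℝ} (hx0 : 0 ≤ x) (hxy : x < y) (hy1 : y < 1) :
    conj x < conj y := by
  have hy0 : 0 ≤ y := by linarith
  have hx1 : x < 1 := by linarith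
  obtain ⟨k, hk⟩ := pow_unbounded_of_one_lt (3 / (y - x)) (by norm_num : (1:ℝ) < 2)
  have hyx : (0:ℝ) < y - x := by linarith
  have h3 : 3 ≤ 2 ^ k * (y - x) := by
    rw [div_lt_iff₀ hyx] at hk
    nlinarith
  have h1 : (mfl k x : ℝ) ≤ 2 ^ k * x := mfl_le hx0 k
  have h2 : mfl k x + 2 ≤ mfl k y := by
    apply Nat.le_floor
    push_cast
    nlinarith
  have hylt := mfl_lt hy0 hy1 k
  have hxlt := mfl_lt hx0 hx1 k
  have step1 : conj x ≤ Q k (mfl k x + 1) := by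
    apply conj_le_Q hx0 hx1 (by omega)
    push_cast
    exact le_mfl_succ_div x k
  have step2 : Q k (mfl k x + 1) < Q k (mfl k x + 2) := Q_strict_mono (by omega) (by omega)
  have step3 : Q k (mfl k x + 2) ≤ Q k (mfl k y) := Q_mono h2 hylt.le
  have step4 : Q k (mfl k y) ≤ conj y := aseq_le_conj hy0 hy1 k
  linarith

lemma conj_unif {x y : ℝ} (k : ℕ) (hx0 : 0 ≤ x) (hxy : x ≤ y) (hy1 : y < 1)
    (hclose : y - x ≤ 1 / 2 ^ k) : conj y - conj x ≤ 2 / ((k:ℝ) + 1) := by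
  have hy0 : 0 ≤ y := by linarith
  have hx1 : x < 1 := by linarith
  have hylt := mfl_lt hy0 hy1 k
  have hp2 : (0:ℝ) < 2 ^ k := by positivity
  have hyb : (2:ℝ) ^ k * y ≤ 2 ^ k * x + 1 := by
    have := mul_le_mul_of_nonneg_left hclose hp2.le
    rw [mul_sub] at this
    have he : (2:ℝ) ^ k * (1 / 2 ^ k) = 1 := by field_simp
    nlinarith
  have hfm : mfl k x ≤ mfl k y := Nat.floor_le_floor (by nlinarith)
  have hfm2 : mfl k y < mfl k x + 2 := by
    rw [mfl, Nat.floor_lt (by positivity)]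
    push_cast
    have := lt_mfl_add x k
    linarith
  have step1 : conj y ≤ Q k (mfl k y + 1) := by
    apply conj_le_Q hy0 hy1 (by omega)
    push_cast
    exact le_mfl_succ_div y k
  have step2 : conj x ≥ Q k (mfl k x) := aseq_le_conj hx0 hx1 k
  have step3 : Q k (mfl k y + 1) - Q k (mfl k x) ≤ ((mfl k y + 1 - mfl k x : ℕ) : ℝ) / ((k:ℝ) + 1) :=
    Q_gap_general (by omega) (by omega)
  have step4 : ((mfl k y + 1 - mfl k x : ℕ) : ℝ) ≤ 2 := by
    have : mfl k y + 1 - mfl k x ≤ 2 := by omega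
    exact_mod_cast this
  have hk1 : (0:ℝ) < (k:ℝ) + 1 := by positivity
  have step5 : ((mfl k y + 1 - mfl k x : ℕ) : ℝ) / ((k:ℝ) + 1) ≤ 2 / ((k:ℝ) + 1) := by
    gcongr
  linarith

lemma conj_continuousOn : ContinuousOn conj (Set.Ico (0:ℝ) 1) := by
  rw [Metric.continuousOn_iff]
  rintro b ⟨hb0, hb1⟩ ε hε
  obtain ⟨k, hk⟩ := exists_nat_gt (2 / ε)
  refine ⟨1 / 2 ^ k, by positivity, ?_⟩
  rintro a ⟨ha0, ha1⟩ hab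
  rw [Real.dist_eq] at hab ⊢
  have hk2 : 2 / ((k:ℝ) + 1) < ε := by
    rw [div_lt_iff₀ hε] at hk
    rw [div_lt_iff₀ (by positivity)]
    nlinarith
  have habs : |a - b| ≤ 1 / 2 ^ k := le_of_lt hab
  rcases le_total a b with h | h
  · have := conj_unif k ha0 h hb1 (by rw [abs_sub_comm] at habs; rw [abs_of_nonneg (by linarith)] at habs; linarith)
    have h2 := conj_strictmono (x := a) (y := b)
    have hmono : conj a ≤ conj b := by
      rcases eq_or_lt_of_le h with rfl | hlt
      · exact le_rfl
      · exact (conj_strictmono ha0 hlt hb1).le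
    rw [abs_of_nonpos (by linarith)]
    linarith
  · have := conj_unif k hb0 h ha1 (by rw [abs_of_nonneg (by linarith)] at habs; linarith)
    have hmono : conj b ≤ conj a := by
      rcases eq_or_lt_of_le h with rfl | hlt
      · exact le_rfl
      · exact (conj_strictmono hb0 hlt ha1).le
    rw [abs_of_nonneg (by linarith)]
    linarith

lemma conj_surjOn : ∀ y ∈ Set.Ico (0:ℝ) 1, ∃ x ∈ Set.Ico (0:ℝ) 1, conj x = y := by
  rintro y ⟨hy0, hy1⟩
  obtain ⟨j, hj⟩ := exists_nat_gt (1 / (1 - y))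
  set d : ℝ := 1 - 1 / 2 ^ j with hd
  have h2j : (0:ℝ) < 2 ^ j := by positivity
  have hjj : (1:ℝ) ≤ 2 ^ j := one_le_pow₀ (by norm_num)
  have hd0 : 0 ≤ d := by
    rw [hd]
    have : (1:ℝ) / 2 ^ j ≤ 1 := by
      rw [div_le_one h2j]; exact hjj
    linarith
  have hd1 : d < 1 := by
    rw [hd]
    have : (0:ℝ) < 1 / 2 ^ j := by positivity
    linarith
  have hconjd : y ≤ conj d := by
    have h1 : (1:ℕ) ≤ 2 ^ j := Nat.one_le_two_pow
    have hmfl : mfl j d = 2 ^ j - 1 := by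
      rw [mfl]
      have he : (2:ℝ) ^ j * d = ((2 ^ j - 1 : ℕ) : ℝ) := by
        push_cast [h1]
        rw [hd]
        field_simp
      rw [he, Nat.floor_natCast]
    have haseq : aseq d j = Q j (2 ^ j - 1) := by rw [aseq, hmfl]
    have h3 : Q j (2 ^ j - 1) ≤ conj d := haseq ▸ aseq_le_conj hd0 hd1 j
    have h4 : y ≤ Q j (2 ^ j - 1) := by
      rw [Q_last]
      rw [le_div_iff₀ (by positivity)]
      have hy2 : 1 - y > 0 := by linarith
      rw [div_lt_iff₀ hy2] at hj
      nlinarith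
    linarith
  have hcont : ContinuousOn conj (Set.Icc 0 d) := by
    apply conj_continuousOn.mono
    intro t ⟨ht0, ht1⟩
    exact ⟨ht0, lt_of_le_of_lt ht1 hd1⟩
  have hivt := intermediate_value_Icc hd0 hcont
  have hy : y ∈ Set.Icc (conj 0) (conj d) := by
    rw [conj_zero]
    exact ⟨hy0, hconjd⟩
  obtain ⟨x, ⟨hx0, hxd⟩, hxy⟩ := hivt hy
  exact ⟨x, ⟨hx0, lt_of_le_of_lt hxd hd1⟩, hxy⟩

noncomputable def H : Set.Ico (0:ℝ) 1 → Set.Ico (0:ℝ) 1 :=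
  fun x => ⟨conj x, conj_nonneg x.2.1 x.2.2, conj_lt_one x.2.1 x.2.2⟩

lemma H_strictMono : StrictMono H := by
  intro a b hab
  exact Subtype.mk_lt_mk.2 (conj_strictmono a.2.1 (Subtype.coe_lt_coe.2 hab) b.2.2)

lemma H_surj : Function.Surjective H := by
  rintro ⟨y, hy⟩
  obtain ⟨x, hx, hxy⟩ := conj_surjOn y hy
  exact ⟨⟨x, hx⟩, Subtype.ext hxy⟩

/-- The conjugacy as an order isomorphism of `[0,1)`. -/
noncomputable def E : Set.Ico (0:ℝ) 1 ≃o Set.Ico (0:ℝ) 1 :=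
  StrictMono.orderIsoOfSurjective H H_strictMono H_surj

lemma E_apply (x : Set.Ico (0:ℝ) 1) : (E x : ℝ) = conj x := by
  rw [E, StrictMono.coe_orderIsoOfSurjective]
  rfl

lemma two_le_pow (N : ℕ) : (2:ℝ) ≤ 2 ^ (N+1) := by
  calc (2:ℝ) = 2 ^ 1 := by norm_num
  _ ≤ 2 ^ (N+1) := by
    apply pow_le_pow_right₀ (by norm_num)
    omega

lemma conj_In (N : ℕ) : ∀ s : ℝ, 0 ≤ s → s < 1 →
    conj ((2 ^ (N+1) - 2 + s) / 2 ^ (N+1)) = 1 - 1 / (((N:ℝ) + 1) + conj s) := by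
  induction N with
  | zero =>
    intro s h0 h1
    have he : ((2:ℝ) ^ 1 - 2 + s) / 2 ^ 1 = s / 2 := by ring
    rw [he, conj_half h0 h1]
    have hpos : (0:ℝ) < 1 + conj s := by
      have := conj_nonneg h0 h1; linarith
    push_cast
    field_simp
    rw [zero_add, mul_sub, mul_one, mul_one_div_cancel hpos.ne']; ring
  | succ N ih =>
    intro s h0 h1
    have h2N : (2:ℝ) ≤ 2 ^ (N+1) := two_le_pow N
    have hp : (0:ℝ) < 2 ^ (N+1) := by positivity
    have hx0 : 0 ≤ ((2:ℝ) ^ (N+1) - 2 + s) / 2 ^ (N+1) := by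
      apply div_nonneg _ hp.le
      linarith
    have hx1 : ((2:ℝ) ^ (N+1) - 2 + s) / 2 ^ (N+1) < 1 := by
      rw [div_lt_one hp]
      linarith
    have he : ((2:ℝ) ^ (N+2) - 2 + s) / 2 ^ (N+2)
        = (1 + (((2:ℝ) ^ (N+1) - 2 + s) / 2 ^ (N+1))) / 2 := by
      field_simp
      ring
    rw [he, conj_halfup hx0 hx1, ih s h0 h1]
    have hc0 := conj_nonneg h0 h1
    have hc1 := conj_lt_one h0 h1
    have hd1 : ((N:ℝ) + 1) + conj s > 0 := by linarith
    have hd2 : ((N:ℝ) + 1 + 1) + conj s > 0 := by linarith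
    have hd3 : 2 - (1 - 1 / (((N:ℝ) + 1) + conj s)) > 0 := by
      have : 1 / (((N:ℝ) + 1) + conj s) > 0 := by positivity
      linarith
    push_cast
    rw [div_eq_iff hd3.ne']
    field_simp
    ring

lemma conj_Jn (N : ℕ) : ∀ s : ℝ, 0 ≤ s → s < 1 →
    conj ((1 + s) / 2 ^ (N+1)) = 1 / (((N:ℝ) + 2) - conj s) := by
  induction N with
  | zero =>
    intro s h0 h1
    have he : (1 + s) / (2:ℝ) ^ 1 = (1 + s) / 2 := by norm_num
    rw [he, conj_halfup h0 h1]
    norm_num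
  | succ N ih =>
    intro s h0 h1
    have h2N : (2:ℝ) ≤ 2 ^ (N+1) := two_le_pow N
    have hp : (0:ℝ) < 2 ^ (N+1) := by positivity
    have hy0 : 0 ≤ (1 + s) / (2:ℝ) ^ (N+1) := by positivity
    have hy1 : (1 + s) / (2:ℝ) ^ (N+1) < 1 := by
      rw [div_lt_one hp]
      linarith
    have he : (1 + s) / (2:ℝ) ^ (N+2) = ((1 + s) / 2 ^ (N+1)) / 2 := by
      rw [div_div, pow_succ]
    rw [he, conj_half hy0 hy1, ih s h0 h1]
    have hc0 := conj_nonneg h0 h1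
    have hc1 := conj_lt_one h0 h1
    have hd1 : ((N:ℝ) + 2) - conj s > 0 := by linarith
    have hd2 : 1 + 1 / (((N:ℝ) + 2) - conj s) > 0 := by positivity
    push_cast
    rw [div_eq_div_iff (by positivity) (by linarith)]
    field_simp
    try ring

end RenyiConj

open RenyiConj

/-- `O_R` is topologically conjugate to the interval realization `Õ` of the
dyadic odometer: there is a homeomorphism `h` of `[0,1)` with `O_R ∘ h = h ∘ Õ`. -/
theorem renyiOdometer_conjugate_dyadic :
    ∃ h : (Set.Ico (0 : ℝ) 1) ≃ₜ (Set.Ico (0 : ℝ) 1),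
      ∀ x : (Set.Ico (0 : ℝ) 1),
        ∃ hv : dyadicIntervalOdometer (x : ℝ) ∈ Set.Ico (0 : ℝ) 1,
          renyiOdometer ((h x : ℝ)) = (h ⟨dyadicIntervalOdometer (x : ℝ), hv⟩ : ℝ) := by
  refine ⟨E.toHomeomorph, ?_⟩
  rintro ⟨x, hx0, hx1⟩
  have ht : (0:ℝ) < 1 - x := by linarith
  set t : ℝ := 1 / (1 - x) with htdef
  have ht0 : 0 < t := by positivity
  have ht1 : 1 ≤ t := by
    rw [htdef, le_div_iff₀ ht]
    linarith
  have hn0 : 0 ≤ Int.log 2 t := by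
    rw [Int.log_of_one_le_right _ ht1]
    exact Int.natCast_nonneg _
  set N : ℕ := (Int.log 2 t).toNat with hNdef
  have hNZ : (N : ℤ) = Int.log 2 t := Int.toNat_of_nonneg hn0
  have hlow : (2:ℝ) ^ N ≤ t := by
    have h := Int.zpow_log_le_self (b := 2) (by norm_num) ht0 (R := ℝ)
    rw [← hNZ, zpow_natCast] at h
    exact_mod_cast h
  have hup : t < (2:ℝ) ^ (N + 1) := by
    have h := Int.lt_zpow_succ_log_self (b := 2) (by norm_num) t (R := ℝ)
    rw [← hNZ] at h
    have : ((2:ℕ):ℝ) ^ ((N:ℤ) + 1) = (2:ℝ) ^ (N+1) := by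
      rw [show ((N:ℤ) + 1) = ((N+1 : ℕ) : ℤ) by push_cast; ring, zpow_natCast]
      norm_num
    rw [this] at h
    exact h
  have hpN : (0:ℝ) < 2 ^ N := by positivity
  have hpN1 : (0:ℝ) < 2 ^ (N+1) := by positivity
  have hlow' : (2:ℝ) ^ N * (1 - x) ≤ 1 := by
    rw [htdef, le_div_iff₀ ht] at hlow
    linarith
  have hup' : 1 < (2:ℝ) ^ (N+1) * (1 - x) := by
    rw [htdef, div_lt_iff₀ ht] at hup
    linarith
  set s : ℝ := 2 ^ (N+1) * x - 2 ^ (N+1) + 2 with hsdef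
  have hs0 : 0 ≤ s := by
    have : (2:ℝ) ^ (N+1) = 2 * 2 ^ N := by ring
    rw [hsdef]
    nlinarith
  have hs1 : s < 1 := by
    rw [hsdef]
    nlinarith
  have hc0 := conj_nonneg hs0 hs1
  have hc1 := conj_lt_one hs0 hs1
  have hxeq : x = (2 ^ (N+1) - 2 + s) / 2 ^ (N+1) := by
    rw [hsdef]
    field_simp
    ring
  have hcx : conj x = 1 - 1 / (((N:ℝ) + 1) + conj s) := by
    rw [hxeq]
    exact conj_In N s hs0 hs1
  -- the odometer image
  have hexp : (2:ℝ) ^ (Int.log 2 (1 / (1 - x)) + 1) = 2 ^ (N+1) := by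
    rw [← htdef, ← hNZ]
    rw [show ((N:ℤ) + 1) = ((N+1 : ℕ) : ℤ) by push_cast; ring, zpow_natCast]
  have hOx : dyadicIntervalOdometer x = (1 + s) / 2 ^ (N+1) := by
    rw [dyadicIntervalOdometer, hexp, hsdef]
    field_simp
    ring
  have h2N1 : (2:ℝ) ≤ 2 ^ (N+1) := two_le_pow N
  have hv : dyadicIntervalOdometer x ∈ Set.Ico (0:ℝ) 1 := by
    rw [hOx]
    constructor
    · positivity
    · rw [div_lt_one hpN1]
      linarith
  refine ⟨hv, ?_⟩
  have hcOx : conj (dyadicIntervalOdometer x) = 1 / (((N:ℝ) + 2) - conj s) := by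
    rw [hOx]
    exact conj_Jn N s hs0 hs1
  -- coercion computations
  have hco1 : ((E.toHomeomorph ⟨x, hx0, hx1⟩ : Set.Ico (0:ℝ) 1) : ℝ) = conj x := by
    rw [OrderIso.coe_toHomeomorph]
    exact E_apply _
  have hco2 : ((E.toHomeomorph ⟨dyadicIntervalOdometer x, hv⟩ : Set.Ico (0:ℝ) 1) : ℝ)
      = conj (dyadicIntervalOdometer x) := by
    rw [OrderIso.coe_toHomeomorph]
    exact E_apply _
  rw [hco1, hco2, hcOx]
  -- now compute the Renyi odometer at conj x
  have hd1 : (0:ℝ) < ((N:ℝ) + 1) + conj s := by positivity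
  have hone : 1 - conj x = 1 / (((N:ℝ) + 1) + conj s) := by
    rw [hcx]; ring
  have hinv : 1 / (1 - conj x) = ((N:ℝ) + 1) + conj s := by
    rw [hone, one_div_one_div]
  have hfl : ⌊1 / (1 - conj x)⌋ = (N:ℤ) + 1 := by
    rw [hinv, Int.floor_eq_iff]
    constructor
    · push_cast; linarith
    · push_cast; linarith
  rw [renyiOdometer, hfl, hinv]
  push_cast
  have hd2 : ((N:ℝ) + 2) - conj s > 0 := by linarith
  rw [div_eq_div_iff (by linarith) (by linarith)]
  ring
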